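/- arXiv:2110.11813 — 5 statements merged into one kernel-verified Lean document; each statement's English description precedes it below -/
import Mathlib

section
/- Consider N subsystems with state spaces ℝ^{n_1}, …, ℝ^{n_N}, update maps f_i : ℝ^{n_i} → ℝ^{n_i}, success regions S_i ⊆ ℝ^{n_i} that are invariant (f_i(S_i) ⊆ S_i), and progress functions p_i : ℝ^{n_i} → [0,1] satisfying p_i(y) = 1 if and only if y ∈ S_i. Assume each subsystem is finite time successful with uniform bound τ_i ∈ ℕ: for every y ∈ ℝ^{n_i}, f_i^{τ_i}(y) ∈ S_i. Let b be any barrier function assigning to each joint state y = (y_1,…,y_N) a value b(y) ∈ [0,1] with b(y) ≥ min_j p_j(y_j). Define the synchronized execution on the product space: at each step, component i is updated to f_i(y_i) if p_i(y_i) ≤ b(y) (it is ticked), and is left unchanged otherwise. Then from every initial joint state the synchronized execution reaches S_1 × ⋯ × S_N within at most τ_1 + ⋯ + τ_N steps, and remains in S_1 × ⋯ × S_N thereafter; i.e. progress synchronization preserves finite time success. -/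
/-- Progress synchronization with any barrier function dominating the
minimum progress preserves finite time success: the synchronized execution reaches
the joint success region `S_1 × ⋯ × S_N` within `τ_1 + ⋯ + τ_N` steps and remains
there. -/
theorem stmt3 (N : ℕ) (hN : 0 < N) (n : Fin N → ℕ)
    (f : ∀ i, EuclideanSpace ℝ (Fin (n i)) → EuclideanSpace ℝ (Fin (n i)))
    (S : ∀ i, Set (EuclideanSpace ℝ (Fin (n i))))
    (p : ∀ i, EuclideanSpace ℝ (Fin (n i)) → ℝ)
    (hp01 : ∀ i y, p i y ∈ Set.Icc (0 : ℝ) 1)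
    (hpS : ∀ i y, p i y = 1 ↔ y ∈ S i)
    (hinv : ∀ i, ∀ y ∈ S i, f i y ∈ S i)
    (τ : Fin N → ℕ)
    (hFTS : ∀ i y, (f i)^[τ i] y ∈ S i)
    (b : (∀ i, EuclideanSpace ℝ (Fin (n i))) → ℝ)
    (hb01 : ∀ y, b y ∈ Set.Icc (0 : ℝ) 1)
    (hbmin : ∀ y, (⨅ j, p j (y j)) ≤ b y)
    (step : (∀ i, EuclideanSpace ℝ (Fin (n i))) → ∀ i, EuclideanSpace ℝ (Fin (n i)))
    (hstep : ∀ y i, step y i = if p i (y i) ≤ b y then f i (y i) else y i) :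
    ∀ y0 k, (∑ i, τ i) ≤ k → ∀ i, (step^[k] y0) i ∈ S i := by
  classical
  have hex : ∀ i (y : EuclideanSpace ℝ (Fin (n i))), ∃ m, (f i)^[m] y ∈ S i :=
    fun i y => ⟨τ i, hFTS i y⟩
  set ρ : ∀ i, EuclideanSpace ℝ (Fin (n i)) → ℕ := fun i y => Nat.find (hex i y) with hρdef
  have hρ_spec : ∀ i y, (f i)^[ρ i y] y ∈ S i := fun i y => Nat.find_spec (hex i y)
  have hρ_le : ∀ i y, ρ i y ≤ τ i := fun i y => Nat.find_le (hFTS i y)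
  have hρ_zero : ∀ i y, ρ i y = 0 ↔ y ∈ S i := by
    intro i y
    constructor
    · intro h; have := hρ_spec i y; rw [h] at this; simpa using this
    · intro h; exact Nat.eq_zero_of_le_zero (Nat.find_le (by simpa using h))
  have hρ_dec : ∀ i y, 0 < ρ i y → ρ i (f i y) ≤ ρ i y - 1 := by
    intro i y h
    apply Nat.find_le
    have := hρ_spec i y
    rwa [← Nat.succ_pred_eq_of_pos h, Function.iterate_succ_apply] at this
  have hmono : ∀ y i, ρ i (step y i) ≤ ρ i (y i) := by
    intro y i
    rw [hstep]
    split
    · by_cases hS : y i ∈ S i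
      · have hfS : f i (y i) ∈ S i := hinv i _ hS
        simp [(hρ_zero i _).2 hfS]
      · have hpos : 0 < ρ i (y i) := Nat.pos_of_ne_zero (fun h => hS ((hρ_zero i _).1 h))
        exact le_trans (hρ_dec i _ hpos) (Nat.sub_le _ _)
    · exact le_rfl
  have hstrict : ∀ y, (∃ i, y i ∉ S i) →
      ∑ i, ρ i (step y i) < ∑ i, ρ i (y i) := by
    rintro y ⟨i0, hi0⟩
    have : Nonempty (Fin N) := ⟨⟨0, hN⟩⟩
    obtain ⟨j, hj⟩ := Finite.exists_min (fun j => p j (y j))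
    have hjb : p j (y j) ≤ b y := le_trans (le_ciInf hj) (hbmin y)
    have hjS : y j ∉ S j := by
      intro hS
      apply hi0
      have h1 : p i0 (y i0) = 1 := le_antisymm (hp01 i0 _).2 (by
        calc (1:ℝ) = p j (y j) := ((hpS j _).2 hS).symm
        _ ≤ p i0 (y i0) := hj i0)
      exact (hpS i0 _).1 h1
    have hpos : 0 < ρ j (y j) := Nat.pos_of_ne_zero (fun h => hjS ((hρ_zero j _).1 h))
    apply Finset.sum_lt_sum (fun i _ => hmono y i)
    refine ⟨j, Finset.mem_univ j, ?_⟩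
    rw [hstep, if_pos hjb]
    exact lt_of_le_of_lt (hρ_dec j _ hpos) (Nat.sub_lt hpos one_pos)
  have main : ∀ k y, (∑ i, ρ i (y i)) ≤ k → ∀ i, (step^[k] y) i ∈ S i := by
    intro k
    induction k with
    | zero =>
      intro y hy i
      simp only [Function.iterate_zero, id]
      have hz : ρ i (y i) = 0 := Nat.eq_zero_of_le_zero (le_trans
        (Finset.single_le_sum (f := fun i => ρ i (y i)) (fun i _ => Nat.zero_le _)
          (Finset.mem_univ i)) hy)
      exact (hρ_zero i _).1 hz
    | succ k ih =>
      intro y hy i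
      rw [Function.iterate_succ_apply]
      apply ih
      by_cases hall : ∀ i, y i ∈ S i
      · have hz : ∀ i, ρ i (step y i) = 0 := by
          intro i
          apply (hρ_zero i _).2
          rw [hstep]; split
          · exact hinv i _ (hall i)
          · exact hall i
        simp [hz]
      · push_neg at hall
        have := hstrict y hall
        omega
  intro y0 k hk i
  apply main k y0 _ i
  calc ∑ i, ρ i (y0 i) ≤ ∑ i, τ i := Finset.sum_le_sum (fun i _ => hρ_le i _)
  _ ≤ k := hk
end

section
/- In the setting of N subsystems (update maps f_i, invariant success regions S_i with p_i(y) = 1 iff y ∈ S_i, and each f_i finite time successful with uniform bound τ_i), consider relative progress synchronization with threshold Δ ≥ 0: at each step, component i is ticked (updated to f_i(y_i)) if and only if p_i(y_i) ≤ min_j p_j(y_j) + Δ, and otherwise left unchanged. Then the relative barrier b(y) = min_j p_j(y_j) + Δ satisfies b(y) ≥ min_j p_j(y_j), and the relatively synchronized execution reaches S_1 × ⋯ × S_N within at most τ_1 + ⋯ + τ_N steps from any initial joint state and remains there. -/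
open Classical in
/-- Number of iterations of `f` needed to reach `S` from `y`. -/
noncomputable def rsteps {α : Type*} (f : α → α) (S : Set α) (τ : ℕ)
    (h : ∀ y, f^[τ] y ∈ S) (y : α) : ℕ :=
  Nat.find (⟨τ, h y⟩ : ∃ m, f^[m] y ∈ S)

open Classical in
lemma rsteps_le {α : Type*} (f : α → α) (S : Set α) (τ : ℕ)
    (h : ∀ y, f^[τ] y ∈ S) (y : α) : rsteps f S τ h y ≤ τ :=
  Nat.find_le (h y)

open Classical in
lemma rsteps_eq_zero_iff {α : Type*} (f : α → α) (S : Set α) (τ : ℕ)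
    (h : ∀ y, f^[τ] y ∈ S) (y : α) : rsteps f S τ h y = 0 ↔ y ∈ S := by
  rw [rsteps, Nat.find_eq_zero]
  simp

open Classical in
lemma rsteps_apply_le {α : Type*} (f : α → α) (S : Set α) (τ : ℕ)
    (h : ∀ y, f^[τ] y ∈ S) (hinv : ∀ y ∈ S, f y ∈ S) (y : α) :
    rsteps f S τ h (f y) ≤ rsteps f S τ h y := by
  by_cases hy : y ∈ S
  · have h1 : rsteps f S τ h (f y) = 0 :=
      (rsteps_eq_zero_iff f S τ h (f y)).2 (hinv y hy)
    omega
  · have hr : rsteps f S τ h y ≠ 0 := fun h0 =>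
      hy ((rsteps_eq_zero_iff f S τ h y).1 h0)
    have hspec : f^[rsteps f S τ h y] y ∈ S := by
      rw [rsteps]; exact Nat.find_spec (p := fun m => f^[m] y ∈ S) ⟨τ, h y⟩
    have : f^[rsteps f S τ h y - 1] (f y) ∈ S := by
      rw [← Function.iterate_succ_apply]
      have : rsteps f S τ h y - 1 + 1 = rsteps f S τ h y := by omega
      rw [Nat.succ_eq_add_one, this]; exact hspec
    have h2 : rsteps f S τ h (f y) ≤ rsteps f S τ h y - 1 := by
      rw [rsteps]; exact Nat.find_le this
    calc rsteps f S τ h (f y) ≤ rsteps f S τ h y - 1 := h2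
      _ ≤ rsteps f S τ h y := Nat.sub_le _ _

open Classical in
lemma rsteps_apply_lt {α : Type*} (f : α → α) (S : Set α) (τ : ℕ)
    (h : ∀ y, f^[τ] y ∈ S) (y : α) (hy : y ∉ S) :
    rsteps f S τ h (f y) < rsteps f S τ h y := by
  have hr : rsteps f S τ h y ≠ 0 := fun h0 =>
    hy ((rsteps_eq_zero_iff f S τ h y).1 h0)
  have hspec : f^[rsteps f S τ h y] y ∈ S := by
    rw [rsteps]; exact Nat.find_spec (p := fun m => f^[m] y ∈ S) ⟨τ, h y⟩
  have hmem : f^[rsteps f S τ h y - 1] (f y) ∈ S := by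
    rw [← Function.iterate_succ_apply]
    have : rsteps f S τ h y - 1 + 1 = rsteps f S τ h y := by omega
    rw [Nat.succ_eq_add_one, this]; exact hspec
  have h2 : rsteps f S τ h (f y) ≤ rsteps f S τ h y - 1 := by
    rw [rsteps]; exact Nat.find_le hmem
  omega

/-- Relative progress synchronization with threshold `Δ ≥ 0`:
the relative barrier `min_j p_j + Δ` dominates the minimum progress, and the
relatively synchronized execution reaches `S_1 × ⋯ × S_N` within
`τ_1 + ⋯ + τ_N` steps from any initial joint state and remains there. -/
theorem stmt4 (N : ℕ) (hN : 0 < N) (n : Fin N → ℕ) (Δ : ℝ) (hΔ : 0 ≤ Δ)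
    (f : ∀ i, EuclideanSpace ℝ (Fin (n i)) → EuclideanSpace ℝ (Fin (n i)))
    (S : ∀ i, Set (EuclideanSpace ℝ (Fin (n i))))
    (p : ∀ i, EuclideanSpace ℝ (Fin (n i)) → ℝ)
    (hp01 : ∀ i y, p i y ∈ Set.Icc (0 : ℝ) 1)
    (hpS : ∀ i y, p i y = 1 ↔ y ∈ S i)
    (hinv : ∀ i, ∀ y ∈ S i, f i y ∈ S i)
    (τ : Fin N → ℕ)
    (hFTS : ∀ i y, (f i)^[τ i] y ∈ S i)
    (step : (∀ i, EuclideanSpace ℝ (Fin (n i))) → ∀ i, EuclideanSpace ℝ (Fin (n i)))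
    (hstep : ∀ y i, step y i =
      if p i (y i) ≤ (⨅ j, p j (y j)) + Δ then f i (y i) else y i) :
    (∀ y : ∀ i, EuclideanSpace ℝ (Fin (n i)),
      (⨅ j, p j (y j)) ≤ (⨅ j, p j (y j)) + Δ) ∧
    (∀ y0 k, (∑ i, τ i) ≤ k → ∀ i, (step^[k] y0) i ∈ S i) := by
  classical
  have : Nonempty (Fin N) := ⟨⟨0, hN⟩⟩
  refine ⟨fun y => le_add_of_nonneg_right hΔ, ?_⟩
  set r : ∀ i, EuclideanSpace ℝ (Fin (n i)) → ℕ :=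
    fun i => rsteps (f i) (S i) (τ i) (hFTS i) with hr
  set V : (∀ i, EuclideanSpace ℝ (Fin (n i))) → ℕ :=
    fun y => ∑ i, r i (y i) with hV
  -- each component of step y is either f applied or unchanged
  have hcases : ∀ y i, step y i = f i (y i) ∨ step y i = y i := by
    intro y i
    rw [hstep]
    split <;> simp
  -- weak decrease componentwise
  have hweak : ∀ y i, r i (step y i) ≤ r i (y i) := by
    intro y i
    rcases hcases y i with h | h
    · rw [h]; exact rsteps_apply_le _ _ _ _ (hinv i) _
    · rw [h]
  -- key: V y ≤ k → all in S after k steps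
  have key : ∀ k y, V y ≤ k → ∀ i, (step^[k] y) i ∈ S i := by
    intro k
    induction k with
    | zero =>
      intro y hy i
      simp only [Function.iterate_zero, id]
      have : r i (y i) = 0 := by
        have := Finset.sum_eq_zero_iff.1 (Nat.le_zero.1 hy) i (Finset.mem_univ i)
        exact this
      exact (rsteps_eq_zero_iff _ _ _ _ _).1 this
    | succ k ih =>
      intro y hy i
      rw [Function.iterate_succ_apply]
      by_cases hall : ∀ j, y j ∈ S j
      · -- all in S, stays in S; V (step y) = 0
        have hstepS : ∀ j, step y j ∈ S j := by
          intro j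
          rcases hcases y j with h | h <;> rw [h]
          · exact hinv j _ (hall j)
          · exact hall j
        have : V (step y) = 0 :=
          Finset.sum_eq_zero fun j _ =>
            (rsteps_eq_zero_iff _ _ _ _ _).2 (hstepS j)
        exact ih (step y) (by omega) i
      · push_neg at hall
        obtain ⟨i₀, hi₀⟩ := hall
        -- minimizer of p
        obtain ⟨j₀, hj₀⟩ := exists_eq_ciInf_of_finite (f := fun j => p j (y j))
        -- the minimizer is ticked
        have hticked : step y j₀ = f j₀ (y j₀) := by
          rw [hstep]
          rw [if_pos]
          rw [← hj₀]
          exact le_add_of_nonneg_right hΔ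
        -- the minimizer is not in S
        have hj₀S : y j₀ ∉ S j₀ := by
          intro hmem
          have h1 : p j₀ (y j₀) = 1 := (hpS j₀ _).2 hmem
          have hle : (⨅ j, p j (y j)) ≤ p i₀ (y i₀) :=
            ciInf_le (Finite.bddBelow_range _) i₀
          have hlt : p i₀ (y i₀) < 1 :=
            lt_of_le_of_ne (hp01 i₀ (y i₀)).2 (fun h => hi₀ ((hpS i₀ _).1 h))
          rw [← hj₀] at hle
          linarith
        -- strict decrease at j₀
        have hstrict : r j₀ (step y j₀) < r j₀ (y j₀) := by
          rw [hticked]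
          exact rsteps_apply_lt _ _ _ _ _ hj₀S
        have hVlt : V (step y) < V y :=
          Finset.sum_lt_sum (fun j _ => hweak y j) ⟨j₀, Finset.mem_univ _, hstrict⟩
        exact ih (step y) (by omega) i
  intro y0 k hk i
  refine key k y0 ?_ i
  calc V y0 ≤ ∑ i, τ i := Finset.sum_le_sum fun i _ => rsteps_le _ _ _ _ _
    _ ≤ k := hk
end

section
/- In the setting of N subsystems (update maps f_i, invariant success regions S_i with p_i(y) = 1 iff y ∈ S_i, and each f_i finite time successful with uniform bound τ_i), fix a finite ordered set of barriers 0 = b_0 < b_1 < ⋯ < b_m = 1 and consider absolute progress synchronization: at each step, letting μ = min_j p_j(y_j), the current barrier is b(y) = the least b_l with b_l > μ (and b(y) = 1 if μ = 1); component i is ticked (updated to f_i(y_i)) if and only if p_i(y_i) ≤ b(y), and otherwise left unchanged. Then b(y) ≥ min_j p_j(y_j) always holds, and the absolutely synchronized execution reaches S_1 × ⋯ × S_N within at most τ_1 + ⋯ + τ_N steps from any initial joint state and remains there. -/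
/-- Absolute progress synchronization with a finite ordered set of
barriers `0 = b_0 < b_1 < ⋯ < b_m = 1`: the current barrier (least barrier
strictly above the minimum progress, and `1` when the minimum progress is `1`)
dominates the minimum progress, and the absolutely synchronized execution reaches
`S_1 × ⋯ × S_N` within `τ_1 + ⋯ + τ_N` steps from any initial joint state and
remains there. -/
theorem stmt5 (N m : ℕ) (hN : 0 < N) (hm : 0 < m) (n : Fin N → ℕ)
    (f : ∀ i, EuclideanSpace ℝ (Fin (n i)) → EuclideanSpace ℝ (Fin (n i)))
    (S : ∀ i, Set (EuclideanSpace ℝ (Fin (n i))))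
    (p : ∀ i, EuclideanSpace ℝ (Fin (n i)) → ℝ)
    (hp01 : ∀ i y, p i y ∈ Set.Icc (0 : ℝ) 1)
    (hpS : ∀ i y, p i y = 1 ↔ y ∈ S i)
    (hinv : ∀ i, ∀ y ∈ S i, f i y ∈ S i)
    (τ : Fin N → ℕ)
    (hFTS : ∀ i y, (f i)^[τ i] y ∈ S i)
    (b : Fin (m + 1) → ℝ) (hb0 : b 0 = 0) (hblast : b (Fin.last m) = 1)
    (hbmono : StrictMono b)
    (bar : (∀ i, EuclideanSpace ℝ (Fin (n i))) → ℝ)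
    (hbar1 : ∀ y, (⨅ j, p j (y j)) = 1 → bar y = 1)
    (hbar2 : ∀ y, (⨅ j, p j (y j)) < 1 →
      IsLeast {t : ℝ | (∃ l, t = b l) ∧ (⨅ j, p j (y j)) < t} (bar y))
    (step : (∀ i, EuclideanSpace ℝ (Fin (n i))) → ∀ i, EuclideanSpace ℝ (Fin (n i)))
    (hstep : ∀ y i, step y i = if p i (y i) ≤ bar y then f i (y i) else y i) :
    (∀ y : ∀ i, EuclideanSpace ℝ (Fin (n i)), (⨅ j, p j (y j)) ≤ bar y) ∧
    (∀ y0 k, (∑ i, τ i) ≤ k → ∀ i, (step^[k] y0) i ∈ S i) := by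
  have hne : Nonempty (Fin N) := Fin.pos_iff_nonempty.mp hN
  -- the infimum is attained
  have hmin : ∀ y : ∀ i, EuclideanSpace ℝ (Fin (n i)),
      ∃ i0, (⨅ j, p j (y j)) = p i0 (y i0) ∧ ∀ j, p i0 (y i0) ≤ p j (y j) := by
    intro y
    obtain ⟨i0, hi0⟩ := Finite.exists_min (fun j => p j (y j))
    refine ⟨i0, le_antisymm ?_ (le_ciInf hi0), hi0⟩
    exact ciInf_le ⟨p i0 (y i0), by rintro t ⟨j, rfl⟩; exact hi0 j⟩ i0
  -- part 1
  have part1 : ∀ y : ∀ i, EuclideanSpace ℝ (Fin (n i)), (⨅ j, p j (y j)) ≤ bar y := by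
    intro y
    obtain ⟨i0, hi0, _⟩ := hmin y
    rcases lt_or_eq_of_le (hi0 ▸ (hp01 i0 (y i0)).2) with h | h
    · exact (le_of_lt ((hbar2 y h).1.2))
    · rw [h, hbar1 y h]
  refine ⟨part1, ?_⟩
  -- distance to success
  set d : ∀ i, EuclideanSpace ℝ (Fin (n i)) → ℕ :=
    fun i z => sInf {t | (f i)^[t] z ∈ S i} with hd
  have dmem : ∀ i z, (f i)^[d i z] z ∈ S i := by
    intro i z
    have h : {t | (f i)^[t] z ∈ S i}.Nonempty := ⟨τ i, hFTS i z⟩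
    exact Nat.sInf_mem h
  have dle : ∀ i z, d i z ≤ τ i := fun i z => Nat.sInf_le (hFTS i z)
  have dzero : ∀ i z, d i z = 0 ↔ z ∈ S i := by
    intro i z
    constructor
    · intro h; have := dmem i z; rwa [h] at this
    · intro h; exact Nat.eq_zero_of_le_zero (Nat.sInf_le (by simpa using h))
  have ddec : ∀ i z, z ∉ S i → d i (f i z) < d i z := by
    intro i z hz
    have h1 : 1 ≤ d i z := by
      rcases Nat.eq_zero_or_pos (d i z) with h | h
      · exact absurd ((dzero i z).mp h) hz
      · exact h
    have : (f i)^[d i z - 1] (f i z) ∈ S i := by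
      rw [← Function.iterate_succ_apply, Nat.succ_eq_add_one, Nat.sub_add_cancel h1]
      exact dmem i z
    calc d i (f i z) ≤ d i z - 1 := Nat.sInf_le this
      _ < d i z := Nat.sub_lt h1 one_pos
  have dS : ∀ i z, z ∈ S i → d i (f i z) = 0 := fun i z hz =>
    (dzero i (f i z)).mpr (hinv i z hz)
  -- key induction
  have key : ∀ k (y : ∀ i, EuclideanSpace ℝ (Fin (n i))),
      (∑ i, d i (y i)) ≤ k → ∀ i, (step^[k] y) i ∈ S i := by
    intro k
    induction k with
    | zero =>
      intro y hy i
      have : d i (y i) = 0 := by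
        have := Finset.sum_eq_zero_iff.mp (Nat.eq_zero_of_le_zero hy)
        exact this i (Finset.mem_univ i)
      exact (dzero i (y i)).mp this
    | succ k ih =>
      intro y hy i
      rw [Function.iterate_succ_apply]
      apply ih
      rcases Nat.eq_zero_or_pos (∑ i, d i (y i)) with h | h
      · -- all in S already; everything is ticked and stays in S
        have hall : ∀ j, y j ∈ S j := by
          intro j
          exact (dzero j (y j)).mp
            (Finset.sum_eq_zero_iff.mp h j (Finset.mem_univ j))
        have hsum : ∀ j, d j (step y j) = 0 := by
          intro j
          rw [hstep]
          split
          · exact dS j (y j) (hall j)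
          · exact (dzero j (y j)).mpr (hall j)
        simp [hsum]
      · -- strict decrease of the total distance
        obtain ⟨i0, hi0eq, hi0min⟩ := hmin y
        -- some component is not in S
        obtain ⟨j0, hj0⟩ : ∃ j, y j ∉ S j := by
          by_contra hc
          push_neg at hc
          have : ∀ j, d j (y j) = 0 := fun j => (dzero j (y j)).mpr (hc j)
          simp [this] at h
        have hpj0 : p j0 (y j0) < 1 :=
          lt_of_le_of_ne (hp01 j0 (y j0)).2 (fun he => hj0 ((hpS j0 (y j0)).mp he))
        have hi0S : y i0 ∉ S i0 := by
          intro hc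
          have : p i0 (y i0) = 1 := (hpS i0 (y i0)).mpr hc
          exact absurd (lt_of_le_of_lt (hi0min j0) hpj0) (by rw [this]; exact lt_irrefl 1)
        have hticked : p i0 (y i0) ≤ bar y := hi0eq ▸ part1 y
        have hle : ∀ j ∈ Finset.univ, d j (step y j) ≤ d j (y j) := by
          intro j _
          rw [hstep]
          split
          · rcases Classical.em (y j ∈ S j) with hj | hj
            · rw [dS j (y j) hj]; exact Nat.zero_le _
            · exact le_of_lt (ddec j (y j) hj)
          · exact le_refl _
        have hlt : d i0 (step y i0) < d i0 (y i0) := by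
          rw [hstep, if_pos hticked]
          exact ddec i0 (y i0) hi0S
        have : (∑ j, d j (step y j)) < ∑ j, d j (y j) :=
          Finset.sum_lt_sum hle ⟨i0, Finset.mem_univ i0, hlt⟩
        omega
  intro y0 k hk i
  apply key k y0 _ i
  calc (∑ i, d i (y0 i)) ≤ ∑ i, τ i := Finset.sum_le_sum (fun i _ => dle i (y0 i))
    _ ≤ k := hk
end

section
/- Consider N subsystems with progress functions p_i valued in [0,1], synchronized with the relative progress threshold Δ ≥ 0: at each step, component i is ticked if and only if p_i ≤ min_j p_j + Δ, an unticked component's progress is unchanged, and each tick changes a component's progress monotonically by at most a ≥ 0 (i.e. p_i(old) ≤ p_i(new) ≤ p_i(old) + a). If initially max_i p_i − min_j p_j ≤ Δ + a (for instance all progresses start at 0), then for every step k of the synchronized execution, max_i p_i − min_j p_j ≤ Δ + a; consequently the progress synchronization distance satisfies π = Σ_{i<j} |p_i − p_j| ≤ (N(N−1)/2)·(Δ + a) at every step, so a smaller threshold Δ yields a uniformly smaller progress distance bound. -/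
/-- Under relative progress synchronization with threshold `Δ ≥ 0`
(component `i` is ticked iff `p_i ≤ min_j p_j + Δ`; unticked progress is
unchanged; each tick increases progress by at most `a`), if initially
`max p − min p ≤ Δ + a` then this bound holds at every step, and the progress
synchronization distance satisfies `π ≤ (N(N−1)/2)·(Δ + a)` at every step. -/
theorem stmt11 (N : ℕ) (hN : 0 < N) (Δ a : ℝ) (hΔ : 0 ≤ Δ) (ha : 0 ≤ a)
    (p : ℕ → Fin N → ℝ)
    (hp01 : ∀ k i, p k i ∈ Set.Icc (0 : ℝ) 1)
    (huntick : ∀ k i, ¬ (p k i ≤ (⨅ j, p k j) + Δ) → p (k + 1) i = p k i)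
    (htick : ∀ k i, p k i ≤ (⨅ j, p k j) + Δ →
      p k i ≤ p (k + 1) i ∧ p (k + 1) i ≤ p k i + a)
    (hinit : (⨆ i, p 0 i) - (⨅ j, p 0 j) ≤ Δ + a) :
    ∀ k, ((⨆ i, p k i) - (⨅ j, p k j) ≤ Δ + a) ∧
      (∑ i, ∑ j, |p k i - p k j|) / 2 ≤ (N : ℝ) * ((N : ℝ) - 1) / 2 * (Δ + a) := by
  have hne : Nonempty (Fin N) := ⟨⟨0, hN⟩⟩
  have bdd : ∀ k, BddAbove (Set.range (p k)) := fun k => (Set.finite_range _).bddAbove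
  have bddb : ∀ k, BddBelow (Set.range (p k)) := fun k => (Set.finite_range _).bddBelow
  have main : ∀ k, (⨆ i, p k i) - (⨅ j, p k j) ≤ Δ + a := by
    intro k
    induction k with
    | zero => exact hinit
    | succ k ih =>
      have hinfle : ∀ i, (⨅ j, p k j) ≤ p k i := fun i => ciInf_le (bddb k) i
      have hsup : ∀ i, p k i ≤ ⨆ j, p k j := fun i => le_ciSup (bdd k) i
      have h1 : ∀ i, p (k+1) i ≤ (⨅ j, p k j) + (Δ + a) := by
        intro i
        by_cases h : p k i ≤ (⨅ j, p k j) + Δ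
        · have := (htick k i h).2; linarith
        · rw [huntick k i h]
          have := hsup i; linarith [ih]
      have h2 : ∀ i, (⨅ j, p k j) ≤ p (k+1) i := by
        intro i
        by_cases h : p k i ≤ (⨅ j, p k j) + Δ
        · have := (htick k i h).1; linarith [hinfle i]
        · rw [huntick k i h]; exact hinfle i
      have hs : (⨆ i, p (k+1) i) ≤ (⨅ j, p k j) + (Δ + a) := ciSup_le h1
      have hi : (⨅ j, p k j) ≤ ⨅ i, p (k+1) i := le_ciInf h2
      linarith
  intro k
  refine ⟨main k, ?_⟩
  have habs : ∀ i j : Fin N, |p k i - p k j| ≤ Δ + a := by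
    intro i j
    have h1 := ciInf_le (bddb k) i
    have h2 := ciInf_le (bddb k) j
    have h3 := le_ciSup (bdd k) i
    have h4 := le_ciSup (bdd k) j
    rw [abs_sub_le_iff]
    constructor <;> linarith [main k]
  have hNcast : (1 : ℝ) ≤ (N : ℝ) := by exact_mod_cast hN
  have hsum : ∑ i, ∑ j, |p k i - p k j| ≤ (N : ℝ) * ((N : ℝ) - 1) * (Δ + a) := by
    calc ∑ i, ∑ j, |p k i - p k j| ≤ ∑ _i : Fin N, ((N : ℝ) - 1) * (Δ + a) := by
          apply Finset.sum_le_sum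
          intro i _
          have hdiag : ∑ j, |p k i - p k j|
              = ∑ j ∈ Finset.univ.erase i, |p k i - p k j| := by
            rw [Finset.sum_erase_eq_sub (Finset.mem_univ i)]
            simp
          rw [hdiag]
          calc ∑ j ∈ Finset.univ.erase i, |p k i - p k j|
              ≤ ∑ _j ∈ Finset.univ.erase i, (Δ + a) :=
                Finset.sum_le_sum (fun j _ => habs i j)
            _ = ((N : ℝ) - 1) * (Δ + a) := by
                rw [Finset.sum_const, Finset.card_erase_of_mem (Finset.mem_univ i),
                  Finset.card_univ, Fintype.card_fin, nsmul_eq_mul]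
                congr 1
                push_cast [Nat.cast_sub hN]
                ring
      _ = (N : ℝ) * ((N : ℝ) - 1) * (Δ + a) := by
          rw [Finset.sum_const, Finset.card_univ, Fintype.card_fin, nsmul_eq_mul]
          ring
  linarith
end

section
/- Consider N subsystems with progress functions p_i valued in [0,1], synchronized with absolute progress barriers 0 = b_0 < b_1 < ⋯ < b_m = 1 of maximal spacing γ = max_l (b_l − b_{l−1}): at each step, letting μ = min_j p_j, the current barrier is b = the least b_l with b_l > μ (b = 1 if μ = 1); component i is ticked if and only if p_i ≤ b, an unticked component's progress is unchanged, and each tick changes a component's progress monotonically by at most a ≥ 0 (i.e. p_i(old) ≤ p_i(new) ≤ p_i(old) + a). If initially max_i p_i − min_j p_j ≤ γ + a (for instance all progresses start at 0), then for every step k of the synchronized execution, max_i p_i − min_j p_j ≤ γ + a; in particular, with m equidistant barriers (γ = 1/m) the pairwise progress differences are bounded by 1/m + a, so a larger number of barriers yields a uniformly smaller progress distance bound. -/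
/-!
Progress never decreases, so the minimum `μ` is nondecreasing. If `μ < 1`, the current barrier
`bar` lies above some barrier `b_j ≤ μ` whose successor already exceeds `μ`, hence
`bar - μ ≤ γ`. A ticked component ends below `bar + a ≤ μ + γ + a`, and an unticked one keeps
its old value, so the new maximum is at most `max (bar + a) (old maximum)` while the minimum has
not dropped: the spread stays within `γ + a`. If `μ = 1` every progress is already `1` and
nothing moves.
-/

open Set

theorem Fin.exists_castSucc_le_lt_succ {α : Type*} [LinearOrder α] {m : ℕ} (b : Fin (m + 1) → α)
    {x : α} (h0 : b 0 ≤ x) {l : Fin (m + 1)} (hl : x < b l) :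
    ∃ j : Fin m, b j.castSucc ≤ x ∧ x < b j.succ := by
  induction l using Fin.induction with
  | zero => exact absurd hl h0.not_gt
  | succ i ih =>
    by_cases hi : b i.castSucc ≤ x
    · exact ⟨i, hi, hl⟩
    · exact ih (not_le.mp hi)

theorem isLeast_barrier_sub_le {m : ℕ} {b : Fin (m + 1) → ℝ} {γ x t : ℝ}
    (hgap : ∀ j : Fin m, b j.succ - b j.castSucc ≤ γ) (h0 : b 0 ≤ x)
    (ht : IsLeast {t : ℝ | (∃ l, t = b l) ∧ x < t} t) : t - x ≤ γ := by
  obtain ⟨⟨l, rfl⟩, hl⟩ := ht.1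
  obtain ⟨j, hjx, hxj⟩ := Fin.exists_castSucc_le_lt_succ b h0 hl
  have hleast : b l ≤ b j.succ := ht.2 ⟨⟨j.succ, rfl⟩, hxj⟩
  linarith [hgap j]

section Spread

variable {ι : Type*} [Finite ι]

theorem abs_sub_le_iSup_sub_iInf (f : ι → ℝ) (i j : ι) : |f i - f j| ≤ (⨆ i, f i) - ⨅ i, f i := by
  have hup (i : ι) : f i ≤ ⨆ i, f i := le_ciSup (finite_range f).bddAbove i
  have hlow (i : ι) : ⨅ i, f i ≤ f i := ciInf_le (finite_range f).bddBelow i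
  rw [abs_sub_le_iff]
  constructor <;> linarith [hup i, hup j, hlow i, hlow j]

theorem iSup_sub_iInf_le_of_le_max {f g : ι → ℝ} {c D : ℝ} (hle : ∀ i, f i ≤ g i)
    (hmax : ∀ i, g i ≤ max c (f i)) (hc : c - ⨅ i, f i ≤ D) (hD : (⨆ i, f i) - ⨅ i, f i ≤ D) :
    (⨆ i, g i) - ⨅ i, g i ≤ D := by
  rcases isEmpty_or_nonempty ι with hι | hι
  · simpa using hD
  have hinf : ⨅ i, f i ≤ ⨅ i, g i := ciInf_mono (finite_range f).bddBelow hle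
  have hsup : ⨆ i, g i ≤ max c (⨆ i, f i) := ciSup_le fun i =>
    (hmax i).trans (max_le_max_left c (le_ciSup (finite_range f).bddAbove i))
  calc (⨆ i, g i) - ⨅ i, g i ≤ max c (⨆ i, f i) - ⨅ i, f i := by linarith
    _ = max (c - ⨅ i, f i) ((⨆ i, f i) - ⨅ i, f i) := (max_sub_sub_right _ _ _).symm
    _ ≤ D := max_le hc hD

end Spread

theorem stmt12_general (N m : ℕ) (a : ℝ)
    (b : Fin (m + 1) → ℝ) (hb0 : b 0 = 0)
    (γ : ℝ) (hγ : γ = ⨆ l : Fin m, (b l.succ - b l.castSucc))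
    (p : ℕ → Fin N → ℝ)
    (hp01 : ∀ k i, p k i ∈ Set.Icc (0 : ℝ) 1)
    (bar : ℕ → ℝ)
    (hbar2 : ∀ k, (⨅ j, p k j) < 1 →
      IsLeast {t : ℝ | (∃ l, t = b l) ∧ (⨅ j, p k j) < t} (bar k))
    (huntick : ∀ k i, ¬ (p k i ≤ bar k) → p (k + 1) i = p k i)
    (htick : ∀ k i, p k i ≤ bar k →
      p k i ≤ p (k + 1) i ∧ p (k + 1) i ≤ p k i + a)
    (hinit : (⨆ i, p 0 i) - (⨅ j, p 0 j) ≤ γ + a) :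
    (∀ k, (⨆ i, p k i) - (⨅ j, p k j) ≤ γ + a) ∧
    ((∀ l : Fin m, b l.succ - b l.castSucc = 1 / (m : ℝ)) →
      ∀ k i j, |p k i - p k j| ≤ 1 / (m : ℝ) + a) := by
  have hgap (l : Fin m) : b l.succ - b l.castSucc ≤ γ :=
    hγ ▸ le_ciSup (f := fun l : Fin m => b l.succ - b l.castSucc) (finite_range _).bddAbove l
  have hmono (k i) : p k i ≤ p (k + 1) i := by
    by_cases h : p k i ≤ bar k
    exacts [(htick k i h).1, (huntick k i h).ge]
  have hspread (k) : (⨆ i, p k i) - (⨅ j, p k j) ≤ γ + a := by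
    induction k with
    | zero => exact hinit
    | succ k ih =>
      by_cases hlt : (⨅ j, p k j) < 1
      · have hbar : bar k - ⨅ j, p k j ≤ γ :=
          isLeast_barrier_sub_le hgap (hb0 ▸ Real.iInf_nonneg fun j => (hp01 k j).1) (hbar2 k hlt)
        refine iSup_sub_iInf_le_of_le_max (c := bar k + a) (hmono k) (fun i => ?_) (by linarith) ih
        by_cases h : p k i ≤ bar k
        · exact le_max_of_le_left (by linarith [(htick k i h).2])
        · exact (huntick k i h).le.trans (le_max_right _ _)
      · have hfrozen : p (k + 1) = p k := funext fun i =>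
          le_antisymm (by linarith [(hp01 (k + 1) i).2, ciInf_le (finite_range (p k)).bddBelow i])
            (hmono k i)
        rwa [hfrozen]
  refine ⟨hspread, fun hequi k i j => ?_⟩
  have hγm : γ ≤ 1 / (m : ℝ) := hγ ▸ Real.iSup_le (fun l => (hequi l).le) (by positivity)
  linarith [abs_sub_le_iSup_sub_iInf (p k) i j, hspread k]

/-- Under absolute progress synchronization with barriers
`0 = b_0 < b_1 < ⋯ < b_m = 1` of maximal spacing `γ` (component `i` is ticked iff
`p_i ≤ bar`, where `bar` is the least barrier strictly above the minimum progress,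
and `bar = 1` when the minimum progress is `1`; unticked progress is unchanged;
each tick increases progress by at most `a`), if initially
`max p − min p ≤ γ + a` then this bound holds at every step; in particular with
`m` equidistant barriers the pairwise progress differences are bounded by
`1/m + a`. -/
theorem stmt12 (N m : ℕ) (hN : 0 < N) (hm : 0 < m) (a : ℝ) (ha : 0 ≤ a)
    (b : Fin (m + 1) → ℝ) (hb0 : b 0 = 0) (hblast : b (Fin.last m) = 1)
    (hbmono : StrictMono b)
    (γ : ℝ) (hγ : γ = ⨆ l : Fin m, (b l.succ - b l.castSucc))
    (p : ℕ → Fin N → ℝ)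
    (hp01 : ∀ k i, p k i ∈ Set.Icc (0 : ℝ) 1)
    (bar : ℕ → ℝ)
    (hbar1 : ∀ k, (⨅ j, p k j) = 1 → bar k = 1)
    (hbar2 : ∀ k, (⨅ j, p k j) < 1 →
      IsLeast {t : ℝ | (∃ l, t = b l) ∧ (⨅ j, p k j) < t} (bar k))
    (huntick : ∀ k i, ¬ (p k i ≤ bar k) → p (k + 1) i = p k i)
    (htick : ∀ k i, p k i ≤ bar k →
      p k i ≤ p (k + 1) i ∧ p (k + 1) i ≤ p k i + a)
    (hinit : (⨆ i, p 0 i) - (⨅ j, p 0 j) ≤ γ + a) :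
    (∀ k, (⨆ i, p k i) - (⨅ j, p k j) ≤ γ + a) ∧
    ((∀ l : Fin m, b l.succ - b l.castSucc = 1 / (m : ℝ)) →
      ∀ k i j, |p k i - p k j| ≤ 1 / (m : ℝ) + a) :=
  stmt12_general N m a b hb0 γ hγ p hp01 bar hbar2 huntick htick hinit
end
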